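/- arXiv:1109.6352 — 5 statements merged into one kernel-verified Lean document; each statement's English description precedes it below -/
import Mathlib

section
/- For every pair of integers (m₁,m₂) ∈ ℤ² with (m₁,m₂) ≠ (0,0), one has ∫₀^{2π} min{1, 1/|m₁ cos θ + m₂ sin θ|} dθ ≤ 2π (1 + log √(m₁² + m₂²)) / √(m₁² + m₂²). -/
/-!
Writing `(m₁, m₂) = r (sin ψ, cos ψ)` turns the integrand into `min 1 |r sin (θ + ψ)|⁻¹`, and by
periodicity the shift by `ψ` disappears. The symmetries of `|sin|` reduce the integral to four
times the one over `[0, π/2]`, where Jordan's inequality `sin θ ≥ 2θ/π` bounds the integrand by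
`min 1 (π / (2 r θ))`: integrating the constant `1` up to `π / (2r)` and `π / (2 r θ)` beyond it
gives `(π / (2r)) (1 + log r)`.
-/

open Real MeasureTheory intervalIntegral

lemma intervalIntegrable_min_one_inv_abs {f : ℝ → ℝ} (hf : Measurable f) (a b : ℝ) :
    IntervalIntegrable (fun x => min 1 |f x|⁻¹) volume a b := by
  rw [intervalIntegrable_iff]
  refine Measure.integrableOn_of_bounded (M := 1) measure_Ioc_lt_top.ne
    (measurable_const.min hf.abs.inv).aestronglyMeasurable (Filter.Eventually.of_forall fun x => ?_)
  rw [Real.norm_of_nonneg (le_min zero_le_one (inv_nonneg.mpr (abs_nonneg _)))]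
  exact min_le_left _ _

lemma min_one_inv_abs_le_of_le {x y : ℝ} (hx : 0 < x) (hxy : x ≤ y) :
    min 1 |y|⁻¹ ≤ min 1 |x|⁻¹ := by
  rw [abs_of_pos hx, abs_of_pos (hx.trans_le hxy)]
  exact min_le_min le_rfl (inv_anti₀ hx hxy)

lemma integral_comp_mul_cos_add_mul_sin {E : Type*} [NormedAddCommGroup E] [NormedSpace ℝ E]
    (F : ℝ → E) (a b : ℝ) :
    ∫ θ in (0:ℝ)..(2 * π), F (a * cos θ + b * sin θ) =
      ∫ θ in (0:ℝ)..(2 * π), F (√(a ^ 2 + b ^ 2) * sin θ) := by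
  set z : ℂ := ⟨b, a⟩
  have hz : ‖z‖ = √(a ^ 2 + b ^ 2) := by
    rw [Complex.norm_def, Complex.normSq_mk]
    ring_nf
  have hrot : ∀ θ, a * cos θ + b * sin θ = √(a ^ 2 + b ^ 2) * sin (θ + z.arg) := fun θ => by
    rw [sin_add, ← hz]
    linear_combination -cos θ * Complex.norm_mul_sin_arg z - sin θ * Complex.norm_mul_cos_arg z
  have hper : Function.Periodic (fun θ => F (√(a ^ 2 + b ^ 2) * sin θ)) (2 * π) := fun θ => by
    simp only [sin_add_two_pi]
  simp_rw [hrot]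
  rw [integral_comp_add_right (fun θ => F (√(a ^ 2 + b ^ 2) * sin θ)), zero_add, add_comm (2 * π),
    hper.intervalIntegral_add_eq z.arg 0, zero_add]

lemma integral_zero_two_pi_eq_four_mul_of_symmetric {E : Type*} [NormedAddCommGroup E]
    [NormedSpace ℝ E] {g : ℝ → E} (hg : ∀ a b : ℝ, IntervalIntegrable g volume a b)
    (hper : Function.Periodic g (2 * π)) (hneg : ∀ x, g (-x) = g x)
    (hreflect : ∀ x, g (π - x) = g x) :
    ∫ θ in (0:ℝ)..(2 * π), g θ = (4 : ℝ) • ∫ θ in (0:ℝ)..(π / 2), g θ := by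
  have hcenter : ∫ θ in (0:ℝ)..(2 * π), g θ = ∫ θ in (-π)..π, g θ := by
    simpa [show -π + 2 * π = π by ring] using (hper.intervalIntegral_add_eq (-π) 0).symm
  have hleft : ∫ θ in (-π)..0, g θ = ∫ θ in (0:ℝ)..π, g θ := by
    simpa [hneg] using (integral_comp_neg (a := 0) (b := π) g).symm
  have hright : ∫ θ in (π / 2)..π, g θ = ∫ θ in (0:ℝ)..(π / 2), g θ := by
    simpa [hreflect, show π - π / 2 = π / 2 by ring] using
      (integral_comp_sub_left (a := 0) (b := π / 2) g π).symm
  rw [hcenter, ← integral_add_adjacent_intervals (hg (-π) 0) (hg 0 π), hleft,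
    ← integral_add_adjacent_intervals (hg 0 (π / 2)) (hg (π / 2) π), hright]
  module

lemma integral_min_one_inv_abs_mul_le {a L : ℝ} (ha : 0 < a) (haL : 1 ≤ a * L) :
    ∫ u in (0:ℝ)..L, min 1 |a * u|⁻¹ ≤ (1 + log (a * L)) / a := by
  have hint := intervalIntegrable_min_one_inv_abs (measurable_const_mul a)
  have hc : 0 < a⁻¹ := inv_pos.mpr ha
  have hcL : a⁻¹ ≤ L := by rwa [inv_le_iff_one_le_mul₀' ha]
  have hL : 0 < L := hc.trans_le hcL
  have hhead : ∫ u in (0:ℝ)..a⁻¹, min 1 |a * u|⁻¹ ≤ a⁻¹ := by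
    calc ∫ u in (0:ℝ)..a⁻¹, min 1 |a * u|⁻¹ ≤ ∫ u in (0:ℝ)..a⁻¹, (1 : ℝ) :=
          integral_mono_on hc.le (hint _ _) intervalIntegrable_const fun _ _ => min_le_left _ _
      _ = a⁻¹ := by simp
  have htail : ∫ u in a⁻¹..L, min 1 |a * u|⁻¹ = log (a * L) / a := by
    calc ∫ u in a⁻¹..L, min 1 |a * u|⁻¹ = ∫ u in a⁻¹..L, a⁻¹ * u⁻¹ := by
          refine integral_congr fun u hu => ?_
          rw [Set.uIcc_of_le hcL] at hu
          have hau : 1 ≤ a * u := by rw [← inv_le_iff_one_le_mul₀' ha]; exact hu.1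
          rw [abs_of_pos (zero_lt_one.trans_le hau), min_eq_right (inv_le_one_of_one_le₀ hau),
            mul_inv]
      _ = log (a * L) / a := by
          rw [intervalIntegral.integral_const_mul, integral_inv_of_pos hc hL, div_inv_eq_mul,
            mul_comm L, inv_mul_eq_div]
  rw [← integral_add_adjacent_intervals (hint 0 a⁻¹) (hint a⁻¹ L), add_div, one_div]
  exact add_le_add hhead htail.le

lemma integral_min_one_inv_abs_mul_sin_le {r : ℝ} (hr : 1 ≤ r) :
    ∫ θ in (0:ℝ)..(2 * π), min 1 |r * sin θ|⁻¹ ≤ 2 * π * (1 + log r) / r := by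
  have hint := intervalIntegrable_min_one_inv_abs (measurable_sin.const_mul r)
  have hsymm := integral_zero_two_pi_eq_four_mul_of_symmetric hint
    (fun θ => by simp only [sin_add_two_pi]) (fun θ => by simp only [sin_neg, mul_neg, abs_neg])
    (fun θ => by simp only [sin_pi_sub])
  have hslope : 0 < 2 / π * r := by positivity
  have hjordan : ∫ θ in (0:ℝ)..(π / 2), min 1 |r * sin θ|⁻¹ ≤
      ∫ θ in (0:ℝ)..(π / 2), min 1 |2 / π * r * θ|⁻¹ := by
    refine integral_mono_on_of_le_Ioo (by positivity) (hint _ _)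
      (intervalIntegrable_min_one_inv_abs (measurable_const_mul _) _ _) fun θ hθ => ?_
    refine min_one_inv_abs_le_of_le (mul_pos hslope hθ.1) ?_
    rw [mul_comm (2 / π) r, mul_assoc]
    exact mul_le_mul_of_nonneg_left (mul_le_sin hθ.1.le hθ.2.le) (by linarith)
  have hbound := integral_min_one_inv_abs_mul_le hslope
    (by rw [show 2 / π * r * (π / 2) = r by field_simp]; exact hr)
  rw [show 2 / π * r * (π / 2) = r by field_simp] at hbound
  rw [hsymm, smul_eq_mul]
  calc 4 * ∫ θ in (0:ℝ)..(π / 2), min 1 |r * sin θ|⁻¹ ≤ 4 * ((1 + log r) / (2 / π * r)) := by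
        gcongr; exact hjordan.trans hbound
    _ = 2 * π * (1 + log r) / r := by field_simp; ring

/-- For every pair of integers `(m₁, m₂) ≠ (0, 0)`,
`∫₀^{2π} min {1, 1/|m₁ cos θ + m₂ sin θ|} dθ
  ≤ 2π (1 + log √(m₁² + m₂²)) / √(m₁² + m₂²)`.
(The integrand differs from the paper's convention only on the finite --
hence null -- set of angles where `m₁ cos θ + m₂ sin θ = 0`, so the
integral is the same.) -/
theorem stmt0 (m₁ m₂ : ℤ) (hm : (m₁, m₂) ≠ (0, 0)) :
    (∫ θ in (0:ℝ)..(2 * π), min 1 |(m₁ : ℝ) * Real.cos θ + (m₂ : ℝ) * Real.sin θ|⁻¹) ≤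
      2 * π * (1 + Real.log (Real.sqrt ((m₁ : ℝ) ^ 2 + (m₂ : ℝ) ^ 2))) /
        Real.sqrt ((m₁ : ℝ) ^ 2 + (m₂ : ℝ) ^ 2) := by
  have hsq : (1 : ℤ) ≤ m₁ ^ 2 + m₂ ^ 2 := by
    rcases eq_or_ne m₁ 0 with rfl | h₁
    · have h₂ : m₂ ≠ 0 := fun h => hm (by rw [h])
      nlinarith [Int.one_le_abs h₂, sq_abs m₂]
    · nlinarith [Int.one_le_abs h₁, sq_abs m₁, sq_nonneg m₂]
  have hr : 1 ≤ √((m₁ : ℝ) ^ 2 + (m₂ : ℝ) ^ 2) := by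
    rw [one_le_sqrt]; exact_mod_cast hsq
  rw [integral_comp_mul_cos_add_mul_sin (fun x => min 1 |x|⁻¹)]
  exact integral_min_one_inv_abs_mul_sin_le hr
end

section
/- For every real number c ≥ 1, one has ∫₀^{π/2} min{1, 1/(c sin θ)} dθ ≤ (π/(2c)) (1 + log c). -/
open Real MeasureTheory intervalIntegral Set

/-!
Split `[0, π/2]` at `a = π/(2c)`. On `[0, a]` the integrand is at most `1`; on `[a, π/2]`
Jordan's inequality `sin θ ≥ 2θ/π` bounds it by `a/θ`, whose integral is `a log((π/2)/a) = a log c`.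
-/

theorem integral_le_mul_one_add_log_of_le_one_of_le_div {f : ℝ → ℝ} {a b : ℝ}
    (ha : 0 < a) (hab : a ≤ b) (hf : IntervalIntegrable f volume 0 b)
    (h_le_one : ∀ θ ∈ Icc 0 a, f θ ≤ 1) (h_le_div : ∀ θ ∈ Icc a b, f θ ≤ a / θ) :
    ∫ θ in (0 : ℝ)..b, f θ ≤ a * (1 + log (b / a)) := by
  have hf₁ : IntervalIntegrable f volume 0 a :=
    hf.mono_set (by rw [uIcc_of_le ha.le, uIcc_of_le (ha.le.trans hab)]; gcongr)
  have hf₂ : IntervalIntegrable f volume a b :=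
    hf.mono_set (by rw [uIcc_of_le hab, uIcc_of_le (ha.le.trans hab)]; gcongr)
  have h_div : IntervalIntegrable (fun θ : ℝ => a / θ) volume a b :=
    (continuousOn_const.div continuousOn_id fun θ hθ =>
      (ha.trans_le (uIcc_of_le hab ▸ hθ).1).ne').intervalIntegrable
  have hfirst : ∫ θ in (0 : ℝ)..a, f θ ≤ a := by
    simpa using integral_mono_on ha.le hf₁ intervalIntegrable_const h_le_one
  have hsecond : ∫ θ in a..b, f θ ≤ a * log (b / a) :=
    calc ∫ θ in a..b, f θ ≤ ∫ θ in a..b, a / θ := integral_mono_on hab hf₂ h_div h_le_div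
      _ = a * log (b / a) := by
        simp_rw [div_eq_mul_inv a]
        rw [intervalIntegral.integral_const_mul, integral_inv_of_pos ha (ha.trans_le hab)]
  rw [← integral_add_adjacent_intervals hf₁ hf₂]
  linarith

theorem inv_mul_sin_le_div {c θ : ℝ} (hc : 0 < c) (hθ : 0 < θ) (hθπ : θ ≤ π / 2) :
    (c * sin θ)⁻¹ ≤ π / (2 * c) / θ := by
  have hjordan : 2 / π * θ ≤ sin θ := mul_le_sin hθ.le hθπ
  calc (c * sin θ)⁻¹ ≤ (c * (2 / π * θ))⁻¹ := by gcongr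
    _ = π / (2 * c) / θ := by field_simp

theorem intervalIntegrable_min_one_inv_mul_sin {c : ℝ} (hc : 0 ≤ c) :
    IntervalIntegrable (fun θ => min 1 (c * sin θ)⁻¹) volume 0 (π / 2) := by
  refine IntervalIntegrable.mono_fun' (g := fun _ => (1 : ℝ)) intervalIntegrable_const
    (by fun_prop) ?_
  filter_upwards [ae_restrict_mem measurableSet_uIoc] with θ hθ
  rw [uIoc_of_le (by positivity)] at hθ
  have hsin : 0 ≤ sin θ := sin_nonneg_of_nonneg_of_le_pi hθ.1.le (by linarith [hθ.2, pi_pos])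
  rw [norm_of_nonneg (le_min zero_le_one (by positivity))]
  exact min_le_left _ _

/-- For every real `c ≥ 1`,
`∫₀^{π/2} min {1, 1/(c sin θ)} dθ ≤ (π/(2c)) (1 + log c)`.
(The integrand differs from the paper's convention only at `θ = 0`, a null set.) -/
theorem stmt1 (c : ℝ) (hc : 1 ≤ c) :
    (∫ θ in (0:ℝ)..(π / 2), min 1 (c * Real.sin θ)⁻¹) ≤ π / (2 * c) * (1 + Real.log c) := by
  have hc₀ : 0 < c := one_pos.trans_le hc
  have ha : 0 < π / (2 * c) := by positivity
  have hab : π / (2 * c) ≤ π / 2 := by gcongr; linarith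
  have hratio : π / 2 / (π / (2 * c)) = c := by field_simp
  have key := integral_le_mul_one_add_log_of_le_one_of_le_div ha hab
    (intervalIntegrable_min_one_inv_mul_sin hc₀.le) (fun θ _ => min_le_left _ _)
    fun θ hθ => (min_le_right _ _).trans (inv_mul_sin_le_div hc₀ (ha.trans_le hθ.1) hθ.2)
  rwa [hratio] at key
end

section
/- Let U ⊆ ℝ² be an open neighborhood of the origin and let F : ℝ² → ℝ be C^∞ on U with F(0,0) = 0 and with vanishing gradient ∇F(0,0) = (0,0). Define f on the open set V := {(ρ,θ) ∈ ℝ² : ρ e(θ) ∈ U} by f(ρ,θ) := ρ^{−2} F(ρ e(θ)) for ρ ≠ 0 and f(0,θ) := ½ e(θ)·(HF(0,0) e(θ)), where HF(0,0) is the Hessian matrix of F at the origin. Then f is C^∞ on V; in particular f(0,θ) = ½ e(θ)·(HF(0,0) e(θ)) is the continuous extension of ρ^{−2} F(ρ e(θ)) to ρ = 0. -/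
/-!
By Taylor's formula with integral remainder, a function with `F 0 = 0` and `DF 0 = 0` satisfies
`F x = ∫₀¹ (1 - t) D²F(t x)(x, x) dt`; hence `ρ⁻² F(ρ v) = ∫₀¹ (1 - t) D²F(t ρ v)(v, v) dt`
for `ρ ≠ 0`, and at `ρ = 0` the right-hand side is `½ D²F(0)(v, v)`. The right-hand side is
an integral over `[0, 1]` of an integrand that is smooth in `(ρ, v, t)`, so it is smooth in
`(ρ, v)`, once `F` has been replaced, via a bump function, by a globally smooth function equal
to `F` near `0`. Away from `ρ = 0` smoothness is immediate, and the statement in polar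
coordinates follows by composing with `(ρ, θ) ↦ (ρ, (cos θ, sin θ))`.
-/

open MeasureTheory Set Filter Topology Metric intervalIntegral

universe u

section ParametricIntegral

-- One universe for `H` and `E`, so that the induction below can pass from `E` to `H →L[ℝ] E`.
variable {H E : Type u} [NormedAddCommGroup H] [NormedSpace ℝ H] [ProperSpace H]
  [NormedAddCommGroup E] [NormedSpace ℝ E] {a b : ℝ}

theorem hasFDerivAt_parametric_intervalIntegral {G : H × ℝ → E} (hG : ContDiff ℝ 1 G) (p₀ : H) :
    HasFDerivAt (fun p => ∫ t in a..b, G (p, t))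
      (∫ t in a..b, (fderiv ℝ G (p₀, t)).comp (ContinuousLinearMap.inl ℝ H ℝ)) p₀ := by
  set DG : H × ℝ → H →L[ℝ] E := fun q => (fderiv ℝ G q).comp (ContinuousLinearMap.inl ℝ H ℝ)
  have hDG : Continuous DG := (hG.continuous_fderiv one_ne_zero).clm_comp continuous_const
  obtain ⟨C, hC⟩ := (isCompact_closedBall p₀ 1 |>.prod isCompact_uIcc).exists_bound_of_continuousOn
    hDG.continuousOn
  refine intervalIntegral.hasFDerivAt_integral_of_dominated_of_fderiv_le
    (F' := fun p t => DG (p, t)) (bound := fun _ => C) (ball_mem_nhds p₀ one_pos)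
    (.of_forall fun p => (hG.continuous.comp (.prodMk_right p)).aestronglyMeasurable)
    ((hG.continuous.comp (.prodMk_right p₀)).intervalIntegrable a b)
    (hDG.comp (.prodMk_right p₀)).aestronglyMeasurable
    (.of_forall fun t ht p hp => hC (p, t) ⟨ball_subset_closedBall hp, uIoc_subset_uIcc ht⟩)
    intervalIntegrable_const (.of_forall fun t _ p _ => ?_)
  exact ((hG.differentiable one_ne_zero (p, t)).hasFDerivAt).comp p (hasFDerivAt_prodMk_left p t)

theorem contDiff_parametric_intervalIntegral [CompleteSpace E] {n : ℕ∞} {G : H × ℝ → E}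
    (hG : ContDiff ℝ n G) :
    ContDiff ℝ n fun p => ∫ t in a..b, G (p, t) := by
  induction n using ENat.nat_induction generalizing E with
  | zero =>
    rw [WithTop.coe_zero, contDiff_zero] at *
    exact continuous_parametric_intervalIntegral_of_continuous' (f := fun p t => G (p, t)) hG a b
  | succ n ih =>
    have hG1 : ContDiff ℝ 1 G := hG.of_le (by exact_mod_cast le_add_self)
    rw [Nat.succ_eq_add_one, Nat.cast_succ, WithTop.coe_add, WithTop.coe_one,
      contDiff_succ_iff_fderiv] at *
    refine ⟨fun p => (hasFDerivAt_parametric_intervalIntegral hG1 p).differentiableAt,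
      by simp, ?_⟩
    have hderiv : fderiv ℝ (fun p => ∫ t in a..b, G (p, t)) =
        fun p => ∫ t in a..b, (fderiv ℝ G (p, t)).comp (ContinuousLinearMap.inl ℝ H ℝ) :=
      funext fun p => (hasFDerivAt_parametric_intervalIntegral hG1 p).fderiv
    rw [hderiv]
    exact ih (hG.2.2.clm_comp (contDiff_const (c := ContinuousLinearMap.inl ℝ H ℝ)))
  | top ih =>
    exact contDiff_infty.2 fun n => ih n (G := G) (hG.of_le (mod_cast le_top))

end ParametricIntegral

theorem ContDiffOn.exists_contDiff_eventuallyEq {E G : Type*} [NormedAddCommGroup E]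
    [NormedSpace ℝ E] [HasContDiffBump E] [NormedAddCommGroup G] [NormedSpace ℝ G]
    {n : ℕ∞} {F : E → G} {U : Set E} {x : E} (hF : ContDiffOn ℝ n F U) (hU : IsOpen U)
    (hx : x ∈ U) : ∃ F' : E → G, ContDiff ℝ n F' ∧ F' =ᶠ[𝓝 x] F := by
  obtain ⟨r, hr, hrU⟩ := nhds_basis_closedBall.mem_iff.1 (hU.mem_nhds hx)
  let χ : ContDiffBump x := ⟨r / 2, r, half_pos hr, half_lt_self hr⟩
  refine ⟨fun y => χ y • F y, contDiff_iff_contDiffAt.2 fun y => ?_, ?_⟩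
  · by_cases hy : y ∈ U
    · exact χ.contDiff.contDiffAt.smul (hF.contDiffAt (hU.mem_nhds hy))
    · have hχy : y ∉ tsupport χ := by rw [χ.tsupport_eq]; exact fun h => hy (hrU h)
      refine (contDiffAt_const (c := (0 : G))).congr_of_eventuallyEq ?_
      filter_upwards [notMem_tsupport_iff_eventuallyEq.1 hχy] with z hz
      simp [hz]
  · filter_upwards [χ.eventuallyEq_one] with y hy
    simp [hy]

theorem map_eq_integral_fderiv_fderiv {E G : Type*} [NormedAddCommGroup E]
    [NormedSpace ℝ E] [NormedAddCommGroup G] [NormedSpace ℝ G] [CompleteSpace G]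
    {F : E → G} {x : E} (hF : ∀ t ∈ Icc (0 : ℝ) 1, ContDiffAt ℝ 2 F (t • x))
    (hF0 : F 0 = 0) (hdF0 : fderiv ℝ F 0 = 0) :
    F x = ∫ t in 0..1, (1 - t) • fderiv ℝ (fderiv ℝ F) (t • x) x x := by
  have := map_add_eq_sum_add_integral_iteratedFDeriv (n := 1) (x := 0) (y := x)
    (by simpa [one_add_one_eq_two] using hF)
  simpa [Finset.sum_range_succ, hF0, hdF0, iteratedFDeriv_two_apply] using this

section RadialQuotient

variable {E G : Type u} [NormedAddCommGroup E] [NormedSpace ℝ E] [NormedAddCommGroup G]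
  [NormedSpace ℝ G]

noncomputable def radialQuotient (F : E → G) (q : ℝ × E) : G :=
  if q.1 = 0 then (1 / 2 : ℝ) • fderiv ℝ (fderiv ℝ F) 0 q.2 q.2 else (q.1 ^ 2)⁻¹ • F (q.1 • q.2)

theorem radialQuotient_eq_integral [CompleteSpace G] {F : E → G} (hF : ContDiff ℝ 2 F)
    (hF0 : F 0 = 0) (hdF0 : fderiv ℝ F 0 = 0) (q : ℝ × E) :
    radialQuotient F q = ∫ t in 0..1, (1 - t) • fderiv ℝ (fderiv ℝ F) (t • q.1 • q.2) q.2 q.2 := by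
  obtain ⟨ρ, v⟩ := q
  by_cases hρ : ρ = 0
  · have hhalf : ∫ t in (0 : ℝ)..1, (1 - t) = 1 / 2 := by
      rw [integral_sub intervalIntegrable_const intervalIntegrable_id, integral_id]
      norm_num
    simp [radialQuotient, hρ, intervalIntegral.integral_smul_const, hhalf]
  · rw [radialQuotient, if_neg hρ,
      map_eq_integral_fderiv_fderiv (fun t _ => hF.contDiffAt) hF0 hdF0,
      ← intervalIntegral.integral_smul]
    refine integral_congr fun t _ => ?_
    simp only [map_smul, smul_apply, smul_smul]
    congr 1
    field_simp

theorem contDiff_radialQuotient [CompleteSpace G] [ProperSpace E] {n : ℕ∞} {F : E → G}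
    (hF : ContDiff ℝ (n + 2) F) (hF0 : F 0 = 0) (hdF0 : fderiv ℝ F 0 = 0) :
    ContDiff ℝ n (radialQuotient F) := by
  have hD2F : ContDiff ℝ n (fderiv ℝ (fderiv ℝ F)) :=
    (hF.fderiv_right (m := n + 1) (by rw [add_assoc, one_add_one_eq_two])).fderiv_right le_rfl
  rw [funext (radialQuotient_eq_integral (hF.of_le le_add_self) hF0 hdF0)]
  refine contDiff_parametric_intervalIntegral (G := fun (q : (ℝ × E) × ℝ) =>
    (1 - q.2) • fderiv ℝ (fderiv ℝ F) (q.2 • q.1.1 • q.1.2) q.1.2 q.1.2) ?_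
  fun_prop

theorem contDiffOn_radialQuotient [CompleteSpace G] [ProperSpace E] [HasContDiffBump E]
    {n : ℕ∞} {F : E → G} {U : Set E} (hU : IsOpen U) (hF : ContDiffOn ℝ (n + 2) F U)
    (hF0 : F 0 = 0) (hdF0 : fderiv ℝ F 0 = 0) :
    ContDiffOn ℝ n (radialQuotient F) {q | q.1 • q.2 ∈ U} := by
  intro q hq
  refine ContDiffAt.contDiffWithinAt ?_
  by_cases hq0 : q.1 = 0
  · have h0U : (0 : E) ∈ U := by simpa [hq0] using hq
    obtain ⟨F', hF', hF'F⟩ := ContDiffOn.exists_contDiff_eventuallyEq (n := n + 2)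
      (mod_cast hF) hU h0U
    have hD2F : fderiv ℝ (fderiv ℝ F') 0 = fderiv ℝ (fderiv ℝ F) 0 := hF'F.fderiv.fderiv_eq
    have hnear : ∀ᶠ q' in 𝓝 q, F' (q'.1 • q'.2) = F (q'.1 • q'.2) := by
      have : Tendsto (fun q' : ℝ × E => q'.1 • q'.2) (𝓝 q) (𝓝 0) :=
        (continuous_fst.smul continuous_snd).tendsto' q 0 (by simp [hq0])
      exact this.eventually hF'F
    refine (contDiff_radialQuotient (mod_cast hF') (hF'F.self_of_nhds.trans hF0)
      (hF'F.fderiv_eq.trans hdF0)).contDiffAt.congr_of_eventuallyEq ?_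
    filter_upwards [hnear] with q' hq'
    simp only [radialQuotient, hD2F, hq']
  · have hnear : radialQuotient F =ᶠ[𝓝 q] fun q' => (q'.1 ^ 2)⁻¹ • F (q'.1 • q'.2) := by
      filter_upwards [(isOpen_ne_fun continuous_fst continuous_const).mem_nhds hq0] with q' hq'
      simp [radialQuotient, hq']
    refine ContDiffAt.congr_of_eventuallyEq ?_ hnear
    have hFq : ContDiffAt ℝ n F (q.1 • q.2) := (hF.contDiffAt (hU.mem_nhds hq)).of_le le_self_add
    exact ((contDiffAt_fst.pow 2).inv (pow_ne_zero 2 hq0)).smul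
      (hFq.comp q (contDiff_fst.smul contDiff_snd).contDiffAt)

end RadialQuotient

theorem stmt2_general (U : Set (ℝ × ℝ)) (hU : IsOpen U)
    (F : ℝ × ℝ → ℝ) (hF : ContDiffOn ℝ (⊤ : ℕ∞) F U)
    (hF0 : F (0, 0) = 0) (hdF0 : fderiv ℝ F (0, 0) = 0) :
    ContDiffOn ℝ (⊤ : ℕ∞)
      (fun p : ℝ × ℝ =>
        if p.1 = 0 then
          (1 / 2) *
            fderiv ℝ (fderiv ℝ F) (0, 0) ((Real.cos p.2, Real.sin p.2) : ℝ × ℝ)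
              ((Real.cos p.2, Real.sin p.2) : ℝ × ℝ)
        else (p.1 ^ 2)⁻¹ * F (p.1 • ((Real.cos p.2, Real.sin p.2) : ℝ × ℝ)))
      {p : ℝ × ℝ | p.1 • ((Real.cos p.2, Real.sin p.2) : ℝ × ℝ) ∈ U} := by
  have hpolar : ContDiff ℝ (⊤ : ℕ∞) fun p : ℝ × ℝ => (p.1, (Real.cos p.2, Real.sin p.2)) := by
    fun_prop
  exact (contDiffOn_radialQuotient (n := ⊤) hU (mod_cast hF) hF0 hdF0).comp
    hpolar.contDiffOn fun p hp => hp

/-- Let `U ⊆ ℝ²` be an open neighbourhood of the origin and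
`F : ℝ² → ℝ` be `C^∞` on `U` with `F(0,0) = 0` and vanishing gradient at the origin.
Then the function `f(ρ,θ) = ρ⁻² F(ρ e(θ))` (for `ρ ≠ 0`), extended at `ρ = 0` by
`f(0,θ) = ½ e(θ)·(HF(0,0) e(θ))` where `HF(0,0)` is the Hessian of `F` at the origin,
is `C^∞` on `V = {(ρ,θ) : ρ e(θ) ∈ U}`; here `e(θ) = (cos θ, sin θ)`. -/
theorem stmt2 (U : Set (ℝ × ℝ)) (hU : IsOpen U) (hU0 : ((0, 0) : ℝ × ℝ) ∈ U)
    (F : ℝ × ℝ → ℝ) (hF : ContDiffOn ℝ (⊤ : ℕ∞) F U)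
    (hF0 : F (0, 0) = 0) (hdF0 : fderiv ℝ F (0, 0) = 0) :
    ContDiffOn ℝ (⊤ : ℕ∞)
      (fun p : ℝ × ℝ =>
        if p.1 = 0 then
          (1 / 2) *
            fderiv ℝ (fderiv ℝ F) (0, 0) ((Real.cos p.2, Real.sin p.2) : ℝ × ℝ)
              ((Real.cos p.2, Real.sin p.2) : ℝ × ℝ)
        else (p.1 ^ 2)⁻¹ * F (p.1 • ((Real.cos p.2, Real.sin p.2) : ℝ × ℝ)))
      {p : ℝ × ℝ | p.1 • ((Real.cos p.2, Real.sin p.2) : ℝ × ℝ) ∈ U} :=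
  stmt2_general U hU F hF hF0 hdF0
end

section
/- For every integer N ≥ 1 and every ξ ∈ [0,1), one has Σ_{(n,m)∈Ξ_N^+} 1/(N − n − m ξ)^4 ≤ min{4, 8/(N²(1−ξ)²)}; moreover for ξ = 1 the sum is still bounded by 4. Here Ξ_N^+ := {(n,m) ∈ ℤ² : 0 < n ≤ N/2, 0 < m ≤ N/2, N/2 < n + m < N}. -/
/-!
Substituting `a = N - n - m` and `u = 1 - ξ` turns the sum into `∑ (a + m u)⁻⁴` over a triangle of
lattice points: rows `1 ≤ a < N/2`, and in row `a` at most `a + 1` values of `m`, all with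
`a + m ≥ N/2`, so that `a + m u ≥ c + a (1 - u)` where `c = N u / 2`.

The bound `3 ≤ 4` compares row `a` with `2 / a³` and telescopes `∑ 2 / a³` against `1 / a²`.
For `8 / (N² u²) = 2 / c²`: when `u ≤ 1/2` the row bound `(a + 1) / (c + a (1 - u))⁴` telescopes
in `a`; when `u > 1/2` each row telescopes in `m` to at most `X⁻⁴ + (2/3) X⁻³` with
`X ≥ max c (a + 1/2)`, and there are at most `2c` rows, or at most five when `c < 3`.
-/

/-- The index set `Ξ_N^+ = {(n,m) ∈ ℤ² : 0 < n ≤ N/2, 0 < m ≤ N/2, N/2 < n+m < N}`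
(the half-integer comparisons with `N/2` are expressed by doubling). -/
noncomputable def XiPlus (N : ℕ) : Finset (ℤ × ℤ) :=
  (Finset.Ioc 0 (N : ℤ) ×ˢ Finset.Ioc 0 (N : ℤ)).filter fun p =>
    2 * p.1 ≤ (N : ℤ) ∧ 2 * p.2 ≤ (N : ℤ) ∧ (N : ℤ) < 2 * (p.1 + p.2) ∧ p.1 + p.2 < (N : ℤ)

open Finset

theorem sum_Ioc_le_of_le_sub {f φ : ℕ → ℝ} {s : ℕ}
    (h : ∀ k, s ≤ k → f (k + 1) ≤ φ k - φ (k + 1)) {n : ℕ} (hsn : s ≤ n) :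
    ∑ k ∈ Ioc s n, f k ≤ φ s - φ n := by
  induction n, hsn using Nat.le_induction with
  | base => simp
  | succ n hsn ih =>
    rw [sum_Ioc_succ_top hsn]
    linarith [h n hsn]

theorem sum_Icc_le_add_of_le_sub {f φ : ℕ → ℝ} {s n : ℕ} (hf : 0 ≤ f s) (hφ : ∀ k, 0 ≤ φ k)
    (h : ∀ k, s ≤ k → f (k + 1) ≤ φ k - φ (k + 1)) :
    ∑ k ∈ Icc s n, f k ≤ f s + φ s := by
  rcases lt_or_ge n s with hns | hsn
  · rw [Icc_eq_empty_of_lt hns, sum_empty]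
    linarith [hφ s]
  · rw [← add_sum_Ioc_eq_sum_Icc hsn]
    linarith [sum_Ioc_le_of_le_sub h hsn, hφ n]

theorem one_div_add_pow_four_le {y d : ℝ} (hy : 0 < y) (hd : 0 < d) :
    1 / (y + d) ^ 4 ≤ 1 / (3 * d) * (1 / y ^ 3 - 1 / (y + d) ^ 3) := by
  rw [div_sub_div _ _ (by positivity) (by positivity), div_mul_div_comm,
    div_le_div_iff₀ (by positivity) (by positivity), ← sub_nonneg]
  ring_nf
  positivity

theorem two_mul_div_add_pow_three_le {y d : ℝ} (hy : 0 < y) (hd : 0 < d) :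
    2 * d / (y + d) ^ 3 ≤ 1 / y ^ 2 - 1 / (y + d) ^ 2 := by
  rw [div_sub_div _ _ (by positivity) (by positivity),
    div_le_div_iff₀ (by positivity) (by positivity), ← sub_nonneg]
  ring_nf
  positivity

theorem sum_Icc_one_div_add_mul_pow_four_le {a u : ℝ} (ha : 0 < a) (hu : 0 < u) (L M : ℕ) :
    ∑ m ∈ Icc L M, 1 / (a + m * u) ^ 4 ≤
      1 / (a + L * u) ^ 4 + 1 / (3 * u) * (1 / (a + L * u) ^ 3) := by
  have hpos : ∀ m : ℕ, 0 < a + m * u := fun m => by positivity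
  refine sum_Icc_le_add_of_le_sub (φ := fun m : ℕ => 1 / (3 * u) * (1 / (a + m * u) ^ 3))
    (by positivity) (fun m => by have := hpos m; positivity) fun m _ => ?_
  push_cast
  rw [add_mul, one_mul, ← add_assoc, ← mul_sub]
  exact one_div_add_pow_four_le (hpos m) hu

theorem add_one_div_add_pow_four_le {y v t : ℝ} (hy : 0 < y) (hv : 0 < v) (ht : t * v ≤ y + v) :
    (t + 1) / (y + v) ^ 4 ≤ (1 / (2 * v ^ 2 * y ^ 2) + 1 / (3 * v * y ^ 3)) -
      (1 / (2 * v ^ 2 * (y + v) ^ 2) + 1 / (3 * v * (y + v) ^ 3)) := by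
  have hyv : 0 < y + v := by linarith
  have hfirst : t / (y + v) ^ 4 ≤ 1 / (2 * v ^ 2) * (1 / y ^ 2 - 1 / (y + v) ^ 2) :=
    calc t / (y + v) ^ 4 ≤ 1 / (2 * v ^ 2) * (2 * v / (y + v) ^ 3) := by
          rw [div_le_iff₀ (by positivity)]
          field_simp
          nlinarith [pow_pos hyv 3]
      _ ≤ 1 / (2 * v ^ 2) * (1 / y ^ 2 - 1 / (y + v) ^ 2) := by
          gcongr
          exact two_mul_div_add_pow_three_le hy hv
  have hsecond := one_div_add_pow_four_le hy hv
  calc (t + 1) / (y + v) ^ 4 = t / (y + v) ^ 4 + 1 / (y + v) ^ 4 := add_div _ _ _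
    _ ≤ 1 / (2 * v ^ 2) * (1 / y ^ 2 - 1 / (y + v) ^ 2) +
        1 / (3 * v) * (1 / y ^ 3 - 1 / (y + v) ^ 3) := add_le_add hfirst hsecond
    _ = _ := by field_simp; ring

theorem two_div_add_pow_four_add_le {c v : ℝ} (hc : 0 < c) (hv : 1 / 2 ≤ v) :
    2 / (c + v) ^ 4 + 1 / (2 * v ^ 2 * (c + v) ^ 2) + 1 / (3 * v * (c + v) ^ 3) ≤ 2 / c ^ 2 :=
  calc 2 / (c + v) ^ 4 + 1 / (2 * v ^ 2 * (c + v) ^ 2) + 1 / (3 * v * (c + v) ^ 3)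
      ≤ 2 / (c + 1 / 2) ^ 4 + 1 / (2 * (1 / 2) ^ 2 * (c + 1 / 2) ^ 2) +
          1 / (3 * (1 / 2) * (c + 1 / 2) ^ 3) := by gcongr
    _ ≤ 2 / c ^ 2 := by
        rw [div_add_div _ _ (by positivity) (by positivity),
          div_add_div _ _ (by positivity) (by positivity),
          div_le_div_iff₀ (by positivity) (by positivity), ← sub_nonneg]
        ring_nf
        positivity

/-- With `a = N - n - m`, the constraints `0 < m` and `n ≤ N/2` of `XiPlus` read `rowStart N a ≤ m`. -/
def rowStart (N a : ℕ) : ℕ := max 1 ((N + 1) / 2 - a)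

noncomputable def gridSum (N : ℕ) (u : ℝ) : ℝ :=
  ∑ a ∈ Icc 1 ((N - 1) / 2), ∑ m ∈ Icc (rowStart N a) (N / 2), 1 / ((a : ℝ) + m * u) ^ 4

theorem sum_XiPlus_eq_gridSum (N : ℕ) (ξ : ℝ) :
    ∑ p ∈ XiPlus N, 1 / ((N : ℝ) - p.1 - p.2 * ξ) ^ 4 = gridSum N (1 - ξ) := by
  rw [gridSum, sum_sigma']
  refine sum_nbij' (fun p => ⟨(N - p.1 - p.2).toNat, p.2.toNat⟩) (fun q => (N - q.1 - q.2, q.2))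
    ?_ ?_ ?_ ?_ ?_
  · rintro ⟨n, m⟩ hp
    simp only [XiPlus, mem_filter, mem_product, mem_Ioc] at hp
    simp only [mem_sigma, mem_Icc, rowStart]
    omega
  · rintro ⟨a, m⟩ hq
    simp only [mem_sigma, mem_Icc, rowStart] at hq
    simp only [XiPlus, mem_filter, mem_product, mem_Ioc]
    omega
  · rintro ⟨n, m⟩ hp
    simp only [XiPlus, mem_filter, mem_product, mem_Ioc] at hp
    simp only [Prod.mk.injEq]
    omega
  · rintro ⟨a, m⟩ hq
    simp only [mem_sigma, mem_Icc, rowStart] at hq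
    simp only [Sigma.mk.injEq, heq_eq_eq]
    omega
  · rintro ⟨n, m⟩ hp
    simp only [XiPlus, mem_filter, mem_product, mem_Ioc] at hp
    have ha : (((N - n - m).toNat : ℕ) : ℝ) = N - n - m := by exact_mod_cast Int.toNat_of_nonneg (by omega)
    have hm : ((m.toNat : ℕ) : ℝ) = m := by exact_mod_cast Int.toNat_of_nonneg (by omega)
    rw [ha, hm]
    ring

theorem sum_rowStart_le {N a : ℕ} {u : ℝ} (hu : 0 ≤ u) (ha : 1 ≤ a) (haN : 2 * a ≤ N) :
    ∑ m ∈ Icc (rowStart N a) (N / 2), 1 / ((a : ℝ) + m * u) ^ 4 ≤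
      (a + 1) / (N * u / 2 + a * (1 - u)) ^ 4 := by
  have ha' : (1 : ℝ) ≤ a := by exact_mod_cast ha
  have haN' : 2 * (a : ℝ) ≤ N := by exact_mod_cast haN
  have hB : 0 < N * u / 2 + a * (1 - u) := by nlinarith
  have hcard : ((Icc (rowStart N a) (N / 2)).card : ℝ) ≤ a + 1 := by
    rw [Nat.card_Icc]
    exact_mod_cast (show N / 2 + 1 - rowStart N a ≤ a + 1 by unfold rowStart; omega)
  have hterm : ∀ m ∈ Icc (rowStart N a) (N / 2),
      1 / ((a : ℝ) + m * u) ^ 4 ≤ 1 / (N * u / 2 + a * (1 - u)) ^ 4 := by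
    intro m hm
    have hm' : (N : ℝ) ≤ 2 * (a + m) := by
      have := (mem_Icc.mp hm).1
      exact_mod_cast (show N ≤ 2 * (a + m) by unfold rowStart at this; omega)
    gcongr 1 / ?_ ^ 4
    nlinarith
  calc ∑ m ∈ Icc (rowStart N a) (N / 2), 1 / ((a : ℝ) + m * u) ^ 4
      ≤ (Icc (rowStart N a) (N / 2)).card • (1 / (N * u / 2 + a * (1 - u)) ^ 4) :=
        sum_le_card_nsmul _ _ _ hterm
    _ ≤ (a + 1) * (1 / (N * u / 2 + a * (1 - u)) ^ 4) := by
        rw [nsmul_eq_mul]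
        gcongr
    _ = (a + 1) / (N * u / 2 + a * (1 - u)) ^ 4 := mul_one_div _ _

theorem sum_rowStart_le_of_half_le {N a : ℕ} (ha : 1 ≤ a) {u : ℝ} (hu : 1 / 2 ≤ u) :
    ∑ m ∈ Icc (rowStart N a) (N / 2), 1 / ((a : ℝ) + m * u) ^ 4 ≤
      1 / (a + rowStart N a * u) ^ 4 + 2 / (3 * (a + rowStart N a * u) ^ 3) := by
  have ha' : (0 : ℝ) < a := by exact_mod_cast ha
  refine (sum_Icc_one_div_add_mul_pow_four_le ha' (by linarith) _ _).trans ?_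
  have hX : 0 < (a : ℝ) + rowStart N a * u := by positivity
  rw [one_div_mul_one_div, add_le_add_iff_left, div_le_div_iff₀ (by positivity) (by positivity)]
  nlinarith [pow_pos hX 3]

theorem le_add_rowStart_mul (N a : ℕ) {u : ℝ} (hu0 : 0 ≤ u) (hu1 : u ≤ 1) :
    N * u / 2 ≤ a + rowStart N a * u := by
  have h : (N : ℝ) ≤ 2 * (a + rowStart N a) := by
    exact_mod_cast (show N ≤ 2 * (a + rowStart N a) by unfold rowStart; omega)
  nlinarith [mul_nonneg (Nat.cast_nonneg (α := ℝ) a) (sub_nonneg.mpr hu1)]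

theorem gridSum_le_three (N : ℕ) {u : ℝ} (hu : 0 ≤ u) : gridSum N u ≤ 3 := by
  have hrow : ∀ a ∈ Icc 1 ((N - 1) / 2),
      ∑ m ∈ Icc (rowStart N a) (N / 2), 1 / ((a : ℝ) + m * u) ^ 4 ≤ 2 / (a : ℝ) ^ 3 := by
    intro a ha
    obtain ⟨ha1, haN⟩ := mem_Icc.mp ha
    have ha' : (1 : ℝ) ≤ a := by exact_mod_cast ha1
    have haN' : 2 * (a : ℝ) ≤ N := by exact_mod_cast (show 2 * a ≤ N by omega)
    refine (sum_rowStart_le hu ha1 (by omega)).trans ?_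
    calc (a + 1) / (N * u / 2 + a * (1 - u)) ^ 4 ≤ (a + a) / (a : ℝ) ^ 4 := by
          gcongr
          nlinarith
      _ = 2 / (a : ℝ) ^ 3 := by field_simp; ring
  refine (sum_le_sum hrow).trans ?_
  have htel := sum_Icc_le_add_of_le_sub (f := fun a : ℕ => 2 / (a : ℝ) ^ 3)
    (φ := fun a : ℕ => 1 / (a : ℝ) ^ 2) (s := 1) (n := (N - 1) / 2) (by norm_num)
    (fun k => by positivity) fun k hk => ?_
  · exact htel.trans (by norm_num)
  · have hk' : (0 : ℝ) < k := by exact_mod_cast hk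
    simpa using two_mul_div_add_pow_three_le hk' one_pos

theorem gridSum_le_of_le_half {N : ℕ} (hN : 1 ≤ N) {u : ℝ} (hu0 : 0 < u) (hu : u ≤ 1 / 2) :
    gridSum N u ≤ 2 / (N * u / 2) ^ 2 := by
  set c : ℝ := N * u / 2
  set v : ℝ := 1 - u
  have hc : 0 < c := div_pos (mul_pos (by exact_mod_cast hN) hu0) two_pos
  have hv : 1 / 2 ≤ v := by linarith
  have hrow : ∀ a ∈ Icc 1 ((N - 1) / 2),
      ∑ m ∈ Icc (rowStart N a) (N / 2), 1 / ((a : ℝ) + m * u) ^ 4 ≤ (a + 1) / (c + a * v) ^ 4 :=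
    fun a ha => sum_rowStart_le hu0.le (mem_Icc.mp ha).1 (by have := (mem_Icc.mp ha).2; omega)
  refine (sum_le_sum hrow).trans ?_
  have htel := sum_Icc_le_add_of_le_sub (f := fun a : ℕ => ((a : ℝ) + 1) / (c + a * v) ^ 4)
    (φ := fun a : ℕ => 1 / (2 * v ^ 2 * (c + a * v) ^ 2) + 1 / (3 * v * (c + a * v) ^ 3))
    (s := 1) (n := (N - 1) / 2) (by positivity) (fun k => by positivity) fun k _ => ?_
  · refine htel.trans (le_of_eq_of_le ?_ (two_div_add_pow_four_add_le hc hv))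
    norm_num
    ring
  · push_cast
    rw [add_mul, one_mul, ← add_assoc]
    exact add_one_div_add_pow_four_le (by positivity) (by linarith) (by nlinarith)

theorem gridSum_le_of_three_le {N : ℕ} {u : ℝ} (hu : 1 / 2 ≤ u) (hu1 : u ≤ 1)
    (hc : 3 ≤ N * u / 2) : gridSum N u ≤ 2 / (N * u / 2) ^ 2 := by
  set c : ℝ := N * u / 2 with hc_def
  have hc0 : 0 < c := by linarith
  have hrow : ∀ a ∈ Icc 1 ((N - 1) / 2),
      ∑ m ∈ Icc (rowStart N a) (N / 2), 1 / ((a : ℝ) + m * u) ^ 4 ≤ 1 / c ^ 4 + 2 / (3 * c ^ 3) := by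
    intro a ha
    refine (sum_rowStart_le_of_half_le (mem_Icc.mp ha).1 hu).trans ?_
    have hX := le_add_rowStart_mul N a (by linarith) hu1
    gcongr
  have hcard : (((N - 1) / 2 : ℕ) : ℝ) ≤ 2 * c := by
    have : (((N - 1) / 2 : ℕ) : ℝ) * 2 ≤ N := by exact_mod_cast (show (N - 1) / 2 * 2 ≤ N by omega)
    nlinarith [(Nat.cast_nonneg N : (0 : ℝ) ≤ N)]
  calc gridSum N u ≤ (Icc 1 ((N - 1) / 2)).card • (1 / c ^ 4 + 2 / (3 * c ^ 3)) :=
        sum_le_card_nsmul _ _ _ hrow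
    _ ≤ 2 * c * (1 / c ^ 4 + 2 / (3 * c ^ 3)) := by
        rw [Nat.card_Icc, add_tsub_cancel_right, nsmul_eq_mul]
        gcongr
    _ ≤ 2 / c ^ 2 := by
        rw [show 2 * c * (1 / c ^ 4 + 2 / (3 * c ^ 3)) = (2 / c + 4 / 3) / c ^ 2 by
          field_simp; ring]
        gcongr
        linarith [show 2 / c ≤ 2 / 3 by gcongr]

theorem gridSum_le_of_lt_three {N : ℕ} (hN : 1 ≤ N) {u : ℝ} (hu : 1 / 2 ≤ u) (hu1 : u ≤ 1)
    (hc : N * u / 2 < 3) : gridSum N u ≤ 2 / (N * u / 2) ^ 2 := by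
  set c : ℝ := N * u / 2 with hc_def
  have hc0 : 0 < c := div_pos (mul_pos (by exact_mod_cast hN) (by linarith)) two_pos
  have hrow : ∀ a ∈ Icc 1 ((N - 1) / 2),
      ∑ m ∈ Icc (rowStart N a) (N / 2), 1 / ((a : ℝ) + m * u) ^ 4 ≤
        (1 / (a + 1 / 2) ^ 2 + 2 / (3 * (a + 1 / 2))) / c ^ 2 := by
    intro a ha
    refine (sum_rowStart_le_of_half_le (mem_Icc.mp ha).1 hu).trans ?_
    set X : ℝ := a + rowStart N a * u
    have hXc : c ≤ X := le_add_rowStart_mul N a (by linarith) hu1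
    have hXa : a + 1 / 2 ≤ X := by
      have : (1 : ℝ) ≤ rowStart N a := by exact_mod_cast le_max_left _ _
      nlinarith
    calc 1 / X ^ 4 + 2 / (3 * X ^ 3) = 1 / (X ^ 2 * X ^ 2) + 2 / (3 * (X * X ^ 2)) := by ring
      _ ≤ 1 / ((a + 1 / 2) ^ 2 * c ^ 2) + 2 / (3 * ((a + 1 / 2) * c ^ 2)) := by gcongr
      _ = (1 / (a + 1 / 2) ^ 2 + 2 / (3 * (a + 1 / 2))) / c ^ 2 := by field_simp
  have hA : (N - 1) / 2 ≤ 5 := by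
    have : (N : ℝ) < 12 := by nlinarith
    have : N < 12 := by exact_mod_cast this
    omega
  calc gridSum N u
      ≤ ∑ a ∈ Icc 1 ((N - 1) / 2), (1 / ((a : ℝ) + 1 / 2) ^ 2 + 2 / (3 * (a + 1 / 2))) / c ^ 2 :=
        sum_le_sum hrow
    _ ≤ ∑ a ∈ Icc (1 : ℕ) 5, (1 / ((a : ℝ) + 1 / 2) ^ 2 + 2 / (3 * (a + 1 / 2))) / c ^ 2 :=
        sum_le_sum_of_subset_of_nonneg (Icc_subset_Icc_right hA) fun _ _ _ => by positivity
    _ ≤ 2 / c ^ 2 := by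
        rw [← sum_div]
        gcongr
        norm_num [sum_Icc_succ_top]

theorem gridSum_le_two_div_sq {N : ℕ} (hN : 1 ≤ N) {u : ℝ} (hu0 : 0 < u) (hu1 : u ≤ 1) :
    gridSum N u ≤ 2 / (N * u / 2) ^ 2 := by
  rcases le_or_gt u (1 / 2) with hu | hu
  · exact gridSum_le_of_le_half hN hu0 hu
  rcases le_or_gt 3 (N * u / 2) with hc | hc
  · exact gridSum_le_of_three_le hu.le hu1 hc
  · exact gridSum_le_of_lt_three hN hu.le hu1 hc

/-- For every integer `N ≥ 1` and every `ξ ∈ [0,1)`,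
`Σ_{(n,m)∈Ξ_N^+} 1/(N − n − mξ)⁴ ≤ min {4, 8/(N²(1−ξ)²)}`; moreover for `ξ = 1`
the sum is still bounded by `4`. -/
theorem stmt8 (N : ℕ) (hN : 1 ≤ N) :
    (∀ ξ ∈ Set.Ico (0 : ℝ) 1,
      (∑ p ∈ XiPlus N, 1 / ((N : ℝ) - (p.1 : ℝ) - (p.2 : ℝ) * ξ) ^ 4) ≤
        min 4 (8 / ((N : ℝ) ^ 2 * (1 - ξ) ^ 2))) ∧
    (∑ p ∈ XiPlus N, 1 / ((N : ℝ) - (p.1 : ℝ) - (p.2 : ℝ)) ^ 4) ≤ 4 := by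
  refine ⟨fun ξ ⟨hξ0, hξ1⟩ => ?_, ?_⟩
  · rw [sum_XiPlus_eq_gridSum, le_min_iff]
    constructor
    · linarith [gridSum_le_three N (u := 1 - ξ) (by linarith)]
    · calc gridSum N (1 - ξ) ≤ 2 / (N * (1 - ξ) / 2) ^ 2 :=
            gridSum_le_two_div_sq hN (by linarith) (by linarith)
        _ = 8 / ((N : ℝ) ^ 2 * (1 - ξ) ^ 2) := by rw [div_pow, div_div_eq_mul_div]; ring
  · have h := sum_XiPlus_eq_gridSum N 1
    simp only [mul_one, sub_self] at h
    linarith [gridSum_le_three N le_rfl]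
end

section
/- For every integer ℓ, setting c_ℓ := (2ℓ+1)π/4, and for every θ ∈ [c_ℓ − π/4, c_ℓ + π/4], one has 1 − min{|tan θ|, |cot θ|} ≥ (4/π) |θ − c_ℓ|. -/
/-!
By the symmetries `θ ↦ θ + π/2` and `θ ↦ π/2 - θ` of `d`, it suffices to take
`θ = π/4 + t` with `0 ≤ t ≤ π/4`. There `d(θ) = cot θ`, and
`1 - cot θ = (sin θ - cos θ) / sin θ ≥ sin θ - cos θ = √2 sin t`, while concavity of `sin` on
`[0, π/4]` gives `sin t ≥ (4t/π) sin (π/4) = 2√2 t / π`.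
-/

open Real

/-- `d(θ) = min {|tan θ|, |cot θ|}`, written as
`min |sin θ| |cos θ| / max |sin θ| |cos θ|` (an identical value, which also
encodes the conventions `d(θ) = |cot θ| = 0` where `cos θ = 0` and
`d(θ) = |tan θ| = 0` where `sin θ = 0`). -/
noncomputable def dmin (θ : ℝ) : ℝ :=
  min |Real.sin θ| |Real.cos θ| / max |Real.sin θ| |Real.cos θ|

lemma dmin_periodic : Function.Periodic dmin (π / 2) := by
  intro x
  rw [dmin, dmin, sin_add_pi_div_two, cos_add_pi_div_two, abs_neg, min_comm, max_comm]

lemma dmin_pi_div_two_sub (x : ℝ) : dmin (π / 2 - x) = dmin x := by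
  rw [dmin, dmin, sin_pi_div_two_sub, cos_pi_div_two_sub, min_comm, max_comm]

lemma dmin_pi_div_four_add_abs (t : ℝ) : dmin (π / 4 + |t|) = dmin (π / 4 + t) := by
  rcases abs_choice t with h | h
  · rw [h]
  · rw [h, ← dmin_pi_div_two_sub (π / 4 + t)]
    ring_nf

lemma dmin_eq_cos_div_sin {x : ℝ} (hsin : 0 < sin x) (hcos : 0 ≤ cos x)
    (hle : cos x ≤ sin x) : dmin x = cos x / sin x := by
  rw [dmin, abs_of_pos hsin, abs_of_nonneg hcos, min_eq_right hle, max_eq_left hle]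

lemma mul_sin_le_sin_mul {s a : ℝ} (hs₀ : 0 ≤ s) (hs₁ : s ≤ 1) (ha₀ : 0 ≤ a) (haπ : a ≤ π) :
    s * sin a ≤ sin (s * a) := by
  simpa using strictConcaveOn_sin_Icc.concaveOn.2 ⟨le_rfl, pi_pos.le⟩ ⟨ha₀, haπ⟩
    (sub_nonneg.2 hs₁) hs₀ (by ring)

lemma four_div_pi_mul_le_sqrt_two_mul_sin {t : ℝ} (ht₀ : 0 ≤ t) (ht : t ≤ π / 4) :
    4 / π * t ≤ √2 * sin t := by
  have hchord : 4 * t / π * sin (π / 4) ≤ sin (4 * t / π * (π / 4)) :=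
    mul_sin_le_sin_mul (by positivity) ((div_le_one pi_pos).2 (by linarith)) (by positivity)
      (by linarith [pi_pos])
  rw [sin_pi_div_four, show 4 * t / π * (π / 4) = t by field_simp] at hchord
  calc 4 / π * t = √2 * (4 * t / π * (√2 / 2)) := by
        field_simp
        rw [sq_sqrt zero_le_two]
    _ ≤ √2 * sin t := by gcongr

lemma sin_sub_cos_pi_div_four_add (t : ℝ) :
    sin (π / 4 + t) - cos (π / 4 + t) = √2 * sin t := by
  rw [sin_add, cos_add, sin_pi_div_four, cos_pi_div_four]
  ring

lemma four_div_pi_mul_le_one_sub_dmin {t : ℝ} (ht₀ : 0 ≤ t) (ht : t ≤ π / 4) :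
    4 / π * t ≤ 1 - dmin (π / 4 + t) := by
  set x := π / 4 + t with hx
  have hgap : 4 / π * t ≤ sin x - cos x :=
    (sin_sub_cos_pi_div_four_add t).symm ▸ four_div_pi_mul_le_sqrt_two_mul_sin ht₀ ht
  have hsin : 0 < sin x := sin_pos_of_pos_of_lt_pi (by positivity) (by linarith [pi_pos, hx])
  have hcos : 0 ≤ cos x := cos_nonneg_of_mem_Icc ⟨by linarith [pi_pos, hx], by linarith [hx]⟩
  have hle : cos x ≤ sin x := by linarith [mul_nonneg (div_nonneg zero_le_four pi_pos.le) ht₀]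
  calc 4 / π * t ≤ sin x - cos x := hgap
    _ ≤ (sin x - cos x) / sin x := le_div_self (sub_nonneg.2 hle) hsin (sin_le_one x)
    _ = 1 - dmin x := by rw [dmin_eq_cos_div_sin hsin hcos hle, sub_div, div_self hsin.ne']

/-- For every integer `ℓ`, with `c_ℓ = (2ℓ+1)π/4`, and every
`θ ∈ [c_ℓ − π/4, c_ℓ + π/4]`, one has
`1 − min {|tan θ|, |cot θ|} ≥ (4/π) |θ − c_ℓ|`. -/
theorem stmt10 (ℓ : ℤ) (θ : ℝ)
    (hθ : θ ∈ Set.Icc ((2 * (ℓ : ℝ) + 1) * π / 4 - π / 4)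
      ((2 * (ℓ : ℝ) + 1) * π / 4 + π / 4)) :
    4 / π * |θ - (2 * (ℓ : ℝ) + 1) * π / 4| ≤ 1 - dmin θ := by
  set t := θ - (2 * (ℓ : ℝ) + 1) * π / 4
  have hθt : θ = π / 4 + t + ℓ * (π / 2) := by ring
  have ht : |t| ≤ π / 4 := abs_le.2 ⟨by linarith [hθ.1], by linarith [hθ.2]⟩
  rw [hθt, dmin_periodic.int_mul ℓ, ← dmin_pi_div_four_add_abs]
  exact four_div_pi_mul_le_one_sub_dmin (abs_nonneg t) ht
end
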